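/- Let F be a field, C, D ∈ M_n(F) commuting matrices, g ∈ F^n, and P, Q ∈ F[x,y]. Suppose X ∈ M_n(F) commutes with both C and D and satisfies g·Q(C,D) = g·X. Then (g·P(C,D))·X = g·Q(C,D)·P(C,D), i.e., the Blackburn attack recovers the shared key. -/

import Mathlib

/-- Evaluation of a bivariate polynomial at a pair of commuting matrices. -/
noncomputable def evalCD {F : Type*} [Field F] {n : ℕ}
    (C D : Matrix (Fin n) (Fin n) F) (P : MvPolynomial (Fin 2) F) :
    Matrix (Fin n) (Fin n) F :=
  ∑ d ∈ P.support, P.coeff d • (C ^ d 0 * D ^ d 1)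

theorem commute_evalCD {F : Type*} [Field F] {n : ℕ} {C D X : Matrix (Fin n) (Fin n) F}
    (hXC : Commute X C) (hXD : Commute X D) (P : MvPolynomial (Fin 2) F) :
    Commute X (evalCD C D P) :=
  Commute.sum_right _ _ _ fun _ _ =>
    ((hXC.pow_right _).mul_right (hXD.pow_right _)).smul_right _

open Matrix in
theorem Matrix.vecMul_vecMul_eq_of_vecMul_eq_of_commute {m R : Type*} [Fintype m]
    [NonUnitalSemiring R] {g : m → R} {A B X : Matrix m m R}
    (hA : g ᵥ* A = g ᵥ* X) (hXB : Commute X B) :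
    (g ᵥ* B) ᵥ* X = g ᵥ* (A * B) :=
  calc (g ᵥ* B) ᵥ* X = g ᵥ* (X * B) := by rw [vecMul_vecMul, hXB.eq]
    _ = (g ᵥ* A) ᵥ* B := by rw [← vecMul_vecMul, hA]
    _ = g ᵥ* (A * B) := vecMul_vecMul _ _ _

theorem stmt_11_general {F : Type*} [Field F] {n : ℕ}
    (C D : Matrix (Fin n) (Fin n) F)
    (g : Fin n → F) (P Q : MvPolynomial (Fin 2) F)
    (X : Matrix (Fin n) (Fin n) F) (hXC : Commute X C) (hXD : Commute X D)
    (hgQ : Matrix.vecMul g (evalCD C D Q) = Matrix.vecMul g X) :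
    Commute X (evalCD C D P) ∧
    Matrix.vecMul (Matrix.vecMul g (evalCD C D P)) X =
      Matrix.vecMul g (evalCD C D Q * evalCD C D P) :=
  have hXP := commute_evalCD hXC hXD P
  ⟨hXP, Matrix.vecMul_vecMul_eq_of_vecMul_eq_of_commute hgQ hXP⟩

theorem stmt_11 {F : Type*} [Field F] {n : ℕ}
    (C D : Matrix (Fin n) (Fin n) F) (hCD : Commute C D)
    (g : Fin n → F) (P Q : MvPolynomial (Fin 2) F)
    (X : Matrix (Fin n) (Fin n) F) (hXC : Commute X C) (hXD : Commute X D)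
    (hgQ : Matrix.vecMul g (evalCD C D Q) = Matrix.vecMul g X) :
    Commute X (evalCD C D P) ∧
    Matrix.vecMul (Matrix.vecMul g (evalCD C D P)) X =
      Matrix.vecMul g (evalCD C D Q * evalCD C D P) :=
  stmt_11_general C D g P Q X hXC hXD hgQ
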